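/- For every natural number n ≥ 1 and elements x, y of a commutative ring, one has the identity (x − y)^n · (x + n·y) = x^(n+1) − ∑_{i=1}^{n} (n + 1 − i) · (x − y)^(n−i) · x^(i−1) · y^2. -/
import Mathlib

private lemma odaka_step_term {R : Type*} [CommRing R] (x y : R) (n i : ℕ) (h : i < n) :
    ((n + 1 - i : ℕ) : R) * ((x - y) ^ (n - i) * x ^ i * y ^ 2) =
      (x - y) * (((n - i : ℕ) : R) * ((x - y) ^ (n - 1 - i) * x ^ i * y ^ 2)) +
        x ^ i * (x - y) ^ (n - i) * y ^ 2 := by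
  have h1 : n + 1 - i = (n - i) + 1 := by omega
  have h2 : n - i = (n - 1 - i) + 1 := by omega
  rw [h1, h2]
  push_cast
  rw [pow_succ]
  ring

theorem odaka_polynomial_identity {R : Type*} [CommRing R] (n : ℕ) (hn : 1 ≤ n)
    (x y : R) :
    (x - y) ^ n * (x + n • y) =
      x ^ (n + 1) -
        ∑ i ∈ Finset.Icc 1 n, ((n + 1 - i : ℕ) : R) * ((x - y) ^ (n - i) * x ^ (i - 1) * y ^ 2) := by
  induction n, hn using Nat.le_induction with
  | base => simp; ring
  | succ n hn ih =>
    have key : (x - y) ^ (n + 1) * (x + (n + 1) • y) =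
        (x - y) * ((x - y) ^ n * (x + n • y)) + (x - y) ^ (n + 1) * y := by
      push_cast [nsmul_eq_mul]; ring
    rw [key, ih]
    -- geometric sum identity: x^(n+1) - (x-y)^(n+1) = (∑ i in range (n+1), x^i * (x-y)^(n-i)) * y
    have geom := geom_sum₂_mul x (x - y) (n + 1)
    simp only [sub_sub_cancel] at geom
    -- Now prove the sum relation
    have hsum : ∑ i ∈ Finset.Icc 1 (n + 1),
          ((n + 1 + 1 - i : ℕ) : R) * ((x - y) ^ (n + 1 - i) * x ^ (i - 1) * y ^ 2) =
        (x - y) * ∑ i ∈ Finset.Icc 1 n,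
          ((n + 1 - i : ℕ) : R) * ((x - y) ^ (n - i) * x ^ (i - 1) * y ^ 2) +
        (∑ i ∈ Finset.range (n + 1), x ^ i * (x - y) ^ (n + 1 - 1 - i)) * y * y := by
      rw [Finset.sum_Icc_succ_top (by omega : 1 ≤ n + 1), Finset.sum_range_succ,
        Finset.mul_sum]
      have hIcc : ∀ f : ℕ → R, ∑ i ∈ Finset.Icc 1 n, f i = ∑ i ∈ Finset.range n, f (1 + i) := by
        intro f
        rw [← Finset.Ico_add_one_right_eq_Icc, Finset.sum_Ico_eq_sum_range]
        simp
      rw [hIcc, hIcc]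
      have hterms : ∑ i ∈ Finset.range n,
            ((n + 1 + 1 - (1 + i) : ℕ) : R) *
              ((x - y) ^ (n + 1 - (1 + i)) * x ^ (1 + i - 1) * y ^ 2) =
          ∑ i ∈ Finset.range n,
            ((x - y) * (((n + 1 - (1 + i) : ℕ) : R) *
              ((x - y) ^ (n - (1 + i)) * x ^ (1 + i - 1) * y ^ 2)) +
              x ^ i * (x - y) ^ (n + 1 - 1 - i) * y ^ 2) := by
        apply Finset.sum_congr rfl
        intro i hi
        simp only [Finset.mem_range] at hi
        have h1 : n + 1 + 1 - (1 + i) = n + 1 - i := by omega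
        have h2 : n + 1 - (1 + i) = n - i := by omega
        have h4 : n - (1 + i) = n - 1 - i := by omega
        have h5 : 1 + i - 1 = i := by omega
        have h6 : n + 1 - 1 - i = n - i := by omega
        rw [h1, h2, h4, h5, h6]
        exact odaka_step_term x y n i hi
      rw [hterms, Finset.sum_add_distrib]
      have h7 : n + 1 + 1 - (n + 1) = 1 := by omega
      have h8 : n + 1 - (n + 1) = 0 := by omega
      have h9 : n + 1 - 1 - n = 0 := by omega
      rw [h7, h8, h9]
      rw [add_mul, add_mul, Finset.sum_mul, Finset.sum_mul]
      simp only [pow_two, mul_assoc, one_mul, pow_zero]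
      simp only [Nat.add_sub_cancel, Nat.cast_one, one_mul]
      ring
    rw [hsum]
    linear_combination y * geom
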